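/- arXiv:2111.07567 — 3 statements merged into one kernel-verified Lean document; each statement's English description precedes it below -/
import Mathlib

section
/- Let 1 < p < ∞ and let f : ℝ → ℝ be convex and differentiable. Then for every a, b ∈ ℝ and every A, B ≥ 0, |a − b|^{p-2}(a − b) · (A |f'(a)|^{p-2} f'(a) − B |f'(b)|^{p-2} f'(b)) ≥ |f(a) − f(b)|^{p-2}(f(a) − f(b)) · (A − B). -/
private lemma grad_ineq (f : ℝ → ℝ) (hconv : ConvexOn ℝ Set.univ f)
    (hdiff : Differentiable ℝ f) (x y : ℝ) :
    deriv f x * (y - x) ≤ f y - f x := by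
  rcases lt_trichotomy x y with h | h | h
  · have := hconv.deriv_le_slope (Set.mem_univ x) (Set.mem_univ y) h (hdiff x)
    rw [slope_def_field] at this
    have hxy : (0:ℝ) < y - x := by linarith
    rw [le_div_iff₀ hxy] at this
    exact this
  · simp [h]
  · have := hconv.slope_le_deriv (Set.mem_univ y) (Set.mem_univ x) h (hdiff x)
    rw [slope_def_field] at this
    have hxy : (0:ℝ) < x - y := by linarith
    rw [div_le_iff₀ hxy] at this
    nlinarith

private lemma phi_nonneg_eq (p : ℝ) (hp : 1 < p) (x : ℝ) (hx : 0 ≤ x) :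
    |x| ^ (p - 2) * x = x ^ (p - 1) := by
  rcases eq_or_lt_of_le hx with h | h
  · rw [← h]
    simp [Real.zero_rpow (by linarith : p - 1 ≠ 0)]
  · rw [abs_of_pos h, ← Real.rpow_add_one h.ne']
    ring_nf

private lemma phi_mono (p : ℝ) (hp : 1 < p) {x y : ℝ} (hxy : x ≤ y) :
    |x| ^ (p - 2) * x ≤ |y| ^ (p - 2) * y := by
  rcases le_or_gt 0 x with hx | hx
  · rw [phi_nonneg_eq p hp x hx, phi_nonneg_eq p hp y (hx.trans hxy)]
    exact Real.rpow_le_rpow hx hxy (by linarith)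
  · rcases le_or_gt 0 y with hy | hy
    · have h1 : |x| ^ (p - 2) * x ≤ 0 :=
        mul_nonpos_of_nonneg_of_nonpos (Real.rpow_nonneg (abs_nonneg x) _) hx.le
      have h2 : 0 ≤ |y| ^ (p - 2) * y :=
        mul_nonneg (Real.rpow_nonneg (abs_nonneg y) _) hy
      linarith
    · have hx' : |x| ^ (p - 2) * x = -(|x| ^ (p - 1)) := by
        rw [abs_of_neg hx, show p - 1 = p - 2 + 1 by ring,
          Real.rpow_add_one (by linarith : (-x) ≠ 0)]
        ring
      have hy' : |y| ^ (p - 2) * y = -(|y| ^ (p - 1)) := by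
        rw [abs_of_neg hy, show p - 1 = p - 2 + 1 by ring,
          Real.rpow_add_one (by linarith : (-y) ≠ 0)]
        ring
      rw [hx', hy', neg_le_neg_iff]
      exact Real.rpow_le_rpow (abs_nonneg y)
        (by rw [abs_of_neg hx, abs_of_neg hy]; linarith) (by linarith)

private lemma phi_mul (p : ℝ) (s t : ℝ) :
    |s * t| ^ (p - 2) * (s * t) = (|s| ^ (p - 2) * s) * (|t| ^ (p - 2) * t) := by
  rw [abs_mul, Real.mul_rpow (abs_nonneg s) (abs_nonneg t)]
  ring

/-- Discrete Picone-type inequality (Brasco–Parini, Lemma A.1): for `f` convex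
and differentiable, `1 < p`, `A, B ≥ 0`,
`|a−b|^{p-2}(a−b)(A|f'(a)|^{p-2}f'(a) − B|f'(b)|^{p-2}f'(b))
  ≥ |f(a)−f(b)|^{p-2}(f(a)−f(b))(A−B)`. -/
theorem stmt1 (p : ℝ) (hp : 1 < p) (f : ℝ → ℝ)
    (hconv : ConvexOn ℝ Set.univ f) (hdiff : Differentiable ℝ f)
    (a b A B : ℝ) (hA : 0 ≤ A) (hB : 0 ≤ B) :
    |f a - f b| ^ (p - 2) * (f a - f b) * (A - B) ≤
      |a - b| ^ (p - 2) * (a - b) *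
        (A * (|deriv f a| ^ (p - 2) * deriv f a) -
          B * (|deriv f b| ^ (p - 2) * deriv f b)) := by
  have h1 : f a - f b ≤ deriv f a * (a - b) := by
    have := grad_ineq f hconv hdiff a b; nlinarith
  have h2 : deriv f b * (a - b) ≤ f a - f b := by
    have := grad_ineq f hconv hdiff b a; nlinarith
  have m1 : |f a - f b| ^ (p - 2) * (f a - f b) ≤
      |deriv f a * (a - b)| ^ (p - 2) * (deriv f a * (a - b)) := phi_mono p hp h1
  have m2 : |deriv f b * (a - b)| ^ (p - 2) * (deriv f b * (a - b)) ≤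
      |f a - f b| ^ (p - 2) * (f a - f b) := phi_mono p hp h2
  have e1 := phi_mul p (deriv f a) (a - b)
  have e2 := phi_mul p (deriv f b) (a - b)
  nlinarith [mul_le_mul_of_nonneg_left m1 hA, mul_le_mul_of_nonneg_left m2 hB]
end

section
/- Let 1 ≤ p < ∞, t ∈ [0,1], and u₁, u₂ : ℝⁿ → [0,∞). Define σ_t(x) = ((1−t) u₁(x)^p + t u₂(x)^p)^{1/p}. Then for all x, y ∈ ℝⁿ, |σ_t(x) − σ_t(y)|^p ≤ (1−t) |u₁(x) − u₁(y)|^p + t |u₂(x) − u₂(y)|^p. -/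
/-- Two-term Minkowski inequality. -/
lemma mink2 (p : ℝ) (hp : 1 ≤ p) {a b c d : ℝ} (ha : 0 ≤ a) (hb : 0 ≤ b)
    (hc : 0 ≤ c) (hd : 0 ≤ d) :
    ((a + c) ^ p + (b + d) ^ p) ^ (1 / p) ≤
      (a ^ p + b ^ p) ^ (1 / p) + (c ^ p + d ^ p) ^ (1 / p) := by
  have := Real.Lp_add_le_of_nonneg (f := ![a, b]) (g := ![c, d])
    (s := Finset.univ) hp ?_ ?_
  · simpa [Fin.sum_univ_two] using this
  · intro i _; fin_cases i <;> simpa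
  · intro i _; fin_cases i <;> simpa

/-- Weighted two-term Minkowski inequality. -/
lemma mink2w (p t : ℝ) (hp : 1 ≤ p) (ht0 : 0 ≤ t) (ht1 : t ≤ 1)
    {a b c d : ℝ} (ha : 0 ≤ a) (hb : 0 ≤ b) (hc : 0 ≤ c) (hd : 0 ≤ d) :
    ((1 - t) * (a + c) ^ p + t * (b + d) ^ p) ^ (1 / p) ≤
      ((1 - t) * a ^ p + t * b ^ p) ^ (1 / p) +
        ((1 - t) * c ^ p + t * d ^ p) ^ (1 / p) := by
  have hp0 : p ≠ 0 := by positivity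
  have hs : (0:ℝ) ≤ 1 - t := by linarith
  have key : ∀ s x : ℝ, 0 ≤ s → 0 ≤ x → (s ^ (1 / p) * x) ^ p = s * x ^ p := by
    intro s x hs hx
    rw [Real.mul_rpow (by positivity) hx, ← Real.rpow_mul hs, one_div,
      inv_mul_cancel₀ hp0, Real.rpow_one]
  have h := mink2 p hp (a := (1 - t) ^ (1 / p) * a) (b := t ^ (1 / p) * b)
    (c := (1 - t) ^ (1 / p) * c) (d := t ^ (1 / p) * d)
    (by positivity) (by positivity) (by positivity) (by positivity)
  rw [← mul_add, ← mul_add, key _ _ hs (by positivity), key _ _ ht0 (by positivity),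
    key _ _ hs ha, key _ _ ht0 hb, key _ _ hs hc, key _ _ ht0 hd] at h
  exact h

/-- Hidden convexity (Brasco–Franzina, Prop. 4.1): for nonnegative `u₁ u₂`,
`t ∈ [0,1]`, `p ≥ 1`, with `σ_t(x) = ((1−t)u₁(x)^p + t u₂(x)^p)^{1/p}`, one has
`|σ_t(x) − σ_t(y)|^p ≤ (1−t)|u₁(x)−u₁(y)|^p + t|u₂(x)−u₂(y)|^p`. -/
theorem stmt2 (n : ℕ) (p t : ℝ) (hp : 1 ≤ p) (ht0 : 0 ≤ t) (ht1 : t ≤ 1)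
    (u₁ u₂ : (Fin n → ℝ) → ℝ) (h₁ : ∀ x, 0 ≤ u₁ x) (h₂ : ∀ x, 0 ≤ u₂ x) :
    ∀ x y : Fin n → ℝ,
      |((1 - t) * u₁ x ^ p + t * u₂ x ^ p) ^ (1 / p) -
        ((1 - t) * u₁ y ^ p + t * u₂ y ^ p) ^ (1 / p)| ^ p ≤
      (1 - t) * |u₁ x - u₁ y| ^ p + t * |u₂ x - u₂ y| ^ p := by
  intro x y
  have hp0 : p ≠ 0 := by positivity
  have hs : (0:ℝ) ≤ 1 - t := by linarith
  set N : ℝ → ℝ → ℝ := fun a b => ((1 - t) * a ^ p + t * b ^ p) ^ (1 / p) with hN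
  -- monotonicity of N
  have mono : ∀ a b a' b' : ℝ, 0 ≤ a → 0 ≤ b → a ≤ a' → b ≤ b' → N a b ≤ N a' b' := by
    intro a b a' b' ha hb haa hbb
    apply Real.rpow_le_rpow (by positivity)
    · gcongr
    · positivity
  -- reverse triangle inequality
  have tri : ∀ a b c d : ℝ, 0 ≤ a → 0 ≤ b → 0 ≤ c → 0 ≤ d →
      N a b - N c d ≤ N |a - c| |b - d| := by
    intro a b c d ha hb hc hd
    have h1 : N a b ≤ N (c + |a - c|) (d + |b - d|) :=
      mono _ _ _ _ ha hb (by cases abs_cases (a - c) with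
        | inl h => linarith [h.1] | inr h => linarith [h.1])
        (by cases abs_cases (b - d) with
        | inl h => linarith [h.1] | inr h => linarith [h.1])
    have h2 := mink2w p t hp ht0 ht1 hc hd (abs_nonneg (a - c)) (abs_nonneg (b - d))
    simp only [hN] at *
    linarith
  have habs : |N (u₁ x) (u₂ x) - N (u₁ y) (u₂ y)| ≤ N |u₁ x - u₁ y| |u₂ x - u₂ y| := by
    rw [abs_sub_le_iff]
    refine ⟨tri _ _ _ _ (h₁ x) (h₂ x) (h₁ y) (h₂ y), ?_⟩
    have := tri _ _ _ _ (h₁ y) (h₂ y) (h₁ x) (h₂ x)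
    rwa [abs_sub_comm (u₁ y), abs_sub_comm (u₂ y)] at this
  calc |N (u₁ x) (u₂ x) - N (u₁ y) (u₂ y)| ^ p
      ≤ (N |u₁ x - u₁ y| |u₂ x - u₂ y|) ^ p :=
        Real.rpow_le_rpow (abs_nonneg _) habs (by positivity)
    _ = (1 - t) * |u₁ x - u₁ y| ^ p + t * |u₂ x - u₂ y| ^ p := by
        rw [hN]
        rw [one_div, Real.rpow_inv_rpow (by positivity) hp0]
end

section
/- Let X be a real normed space, λ > 0, and exponents 1 < p < 2r < q. Fix u ∈ X with u ≠ 0 and positive real constants A = ‖u‖^p > 0, B = λ |u|_q^q > 0, C = [u]_r^{2r} ≥ 0. Define h(t) = (t^p/p) A − (t^q/q) B + (t^{2r}/(2r)) C for t ≥ 0. Then there exists a unique τ₀ > 0 with h'(τ₀) = 0, i.e., τ₀^{p-1} A − τ₀^{q-1} B + τ₀^{2r-1} C = 0, and τ₀ is the unique global maximum of h on (0,∞). -/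
/-!
Writing `h' (t) = t^(q-1) g(t)` with `g(t) = A t^(p-q) - B + C t^(2r-q)`, the factor `g` is strictly
decreasing on `(0, ∞)` (both exponents are negative), tends to `+∞` at `0⁺` and to `-B < 0` at
`+∞`. So `g` has exactly one zero `τ₀`, `h` increases strictly on `(0, τ₀]` and decreases strictly on
`[τ₀, ∞)`, and `τ₀` is the strict global maximum of `h`; two strict global maxima cannot coexist.
-/

open Real Set Filter Topology

theorem lt_of_hasDerivAt_pos_of_neg {f f' : ℝ → ℝ} {a τ t : ℝ} (haτ : a < τ)
    (hf : ∀ x, a < x → HasDerivAt f (f' x) x) (hpos : ∀ x ∈ Ioo a τ, 0 < f' x)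
    (hneg : ∀ x, τ < x → f' x < 0) (hat : a < t) (htτ : t ≠ τ) : f t < f τ := by
  have hcont : ContinuousOn f (Ioi a) := fun x hx => (hf x hx).continuousAt.continuousWithinAt
  rcases htτ.lt_or_gt with hlt | hgt
  · have hmono : StrictMonoOn f (Ioc a τ) := by
      refine strictMonoOn_of_hasDerivWithinAt_pos (f' := f') (convex_Ioc a τ)
        (hcont.mono Ioc_subset_Ioi_self) (fun x hx => ?_) fun x hx => ?_
      · rw [interior_Ioc] at hx
        exact (hf x hx.1).hasDerivWithinAt
      · rw [interior_Ioc] at hx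
        exact hpos x hx
    exact hmono ⟨hat, hlt.le⟩ ⟨haτ, le_rfl⟩ hlt
  · have hanti : StrictAntiOn f (Ici τ) := by
      refine strictAntiOn_of_hasDerivWithinAt_neg (f' := f') (convex_Ici τ)
        (hcont.mono fun x hx => haτ.trans_le hx) (fun x hx => ?_) fun x hx => ?_
      · rw [interior_Ici] at hx
        exact (hf x (haτ.trans hx)).hasDerivWithinAt
      · rw [interior_Ici] at hx
        exact hneg x hx
    exact hanti self_mem_Ici hgt.le hgt

theorem hasDerivAt_rpow_div_self {p x : ℝ} (hp : p ≠ 0) (hx : x ≠ 0) :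
    HasDerivAt (fun t : ℝ => t ^ p / p) (x ^ (p - 1)) x := by
  simpa [mul_div_cancel_left₀ _ hp] using
    (Real.hasDerivAt_rpow_const (p := p) (Or.inl hx)).div_const p

noncomputable section FiberMap

variable (A B C p q s : ℝ)

/-- The fiber map `t ↦ J(t u)`, with `A = ‖u‖^p`, `B = λ|u|_q^q`, `C = [u]_r^{2r}` and `s = 2r`. -/
def fiberMap (t : ℝ) : ℝ := t ^ p / p * A - t ^ q / q * B + t ^ s / s * C

/-- `h'(t) / t^(q-1)`, written with the exponents `a = p - q` and `b = s - q`. -/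
def fiberSlope (a b t : ℝ) : ℝ := A * t ^ a - B + C * t ^ b

variable {A B C p q s}

theorem hasDerivAt_fiberMap (hp : p ≠ 0) (hq : q ≠ 0) (hs : s ≠ 0) {x : ℝ} (hx : x ≠ 0) :
    HasDerivAt (fiberMap A B C p q s)
      (x ^ (p - 1) * A - x ^ (q - 1) * B + x ^ (s - 1) * C) x :=
  (((hasDerivAt_rpow_div_self hp hx).mul_const A).sub
    ((hasDerivAt_rpow_div_self hq hx).mul_const B)).add
    ((hasDerivAt_rpow_div_self hs hx).mul_const C)

theorem rpow_sub_one_mul_fiberSlope {x : ℝ} (hx : 0 < x) :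
    x ^ (q - 1) * fiberSlope A B C (p - q) (s - q) x =
      x ^ (p - 1) * A - x ^ (q - 1) * B + x ^ (s - 1) * C := by
  have hp : x ^ (q - 1) * x ^ (p - q) = x ^ (p - 1) := by rw [← rpow_add hx]; ring_nf
  have hs : x ^ (q - 1) * x ^ (s - q) = x ^ (s - 1) := by rw [← rpow_add hx]; ring_nf
  rw [fiberSlope]
  linear_combination A * hp + C * hs

theorem strictAntiOn_fiberSlope {a b : ℝ} (hA : 0 < A) (hC : 0 ≤ C) (ha : a < 0) (hb : b ≤ 0) :
    StrictAntiOn (fiberSlope A B C a b) (Ioi 0) := by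
  intro x hx y _ hxy
  have hya : y ^ a < x ^ a := rpow_lt_rpow_of_neg hx hxy ha
  have hyb : y ^ b ≤ x ^ b := rpow_le_rpow_of_nonpos hx hxy.le hb
  simp only [fiberSlope]
  nlinarith

theorem tendsto_fiberSlope_nhdsGT_zero {a b : ℝ} (hA : 0 < A) (hC : 0 ≤ C) (ha : a < 0) :
    Tendsto (fiberSlope A B C a b) (𝓝[>] 0) atTop := by
  have hnonneg : (0 : ℝ → ℝ) ≤ᶠ[𝓝[>] 0] fun t => C * t ^ b :=
    eventually_mem_nhdsWithin.mono fun t ht => mul_nonneg hC (rpow_nonneg (le_of_lt ht) b)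
  exact (tendsto_atTop_add_const_right _ (-B)
    ((tendsto_rpow_neg_nhdsGT_zero ha).const_mul_atTop hA)).atTop_add_zero_eventuallyLE hnonneg

theorem tendsto_fiberSlope_atTop {a b : ℝ} (ha : a < 0) (hb : b < 0) :
    Tendsto (fiberSlope A B C a b) atTop (𝓝 (-B)) := by
  have hlim : ∀ {c : ℝ}, c < 0 → Tendsto (fun t : ℝ => t ^ c) atTop (𝓝 0) := fun {c} hc => by
    simpa using tendsto_rpow_neg_atTop (neg_pos.mpr hc)
  show Tendsto (fun t => A * t ^ a - B + C * t ^ b) atTop (𝓝 (-B))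
  simpa using ((hlim ha).const_mul A).sub_const B |>.add ((hlim hb).const_mul C)

theorem exists_fiberSlope_eq_zero {a b : ℝ} (hA : 0 < A) (hB : 0 < B) (hC : 0 ≤ C)
    (ha : a < 0) (hb : b < 0) : ∃ τ, 0 < τ ∧ fiberSlope A B C a b τ = 0 := by
  have hcont : ContinuousOn (fiberSlope A B C a b) (Ioi 0) := fun x hx =>
    ContinuousAt.continuousWithinAt (by
      unfold fiberSlope; fun_prop (disch := exact Or.inl (ne_of_gt hx)))
  obtain ⟨τ, hτ, hzero⟩ := isPreconnected_Ioi.intermediate_value_Ioi (l₂ := 𝓝[>] 0)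
    (le_principal_iff.mpr (Ioi_mem_atTop 0)) inf_le_right hcont (tendsto_fiberSlope_atTop ha hb)
    (tendsto_fiberSlope_nhdsGT_zero hA hC ha) (neg_neg_of_pos hB : -B < 0)
  exact ⟨τ, hτ, hzero⟩

end FiberMap

/-- Fibering lemma on the Nehari manifold: for `1 < p < 2r < q`, `A, B > 0`,
`C ≥ 0` and `h(t) = (t^p/p)A − (t^q/q)B + (t^{2r}/(2r))C`, there is a unique
`τ₀ > 0` with `τ₀^{p-1}A − τ₀^{q-1}B + τ₀^{2r-1}C = 0`, and `τ₀` is the unique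
global maximum of `h` on `(0,∞)`. -/
theorem stmt7 (p q r A B C : ℝ) (hp : 1 < p) (hpr : p < 2 * r) (hrq : 2 * r < q)
    (hA : 0 < A) (hB : 0 < B) (hC : 0 ≤ C) :
    ∃! τ₀ : ℝ, 0 < τ₀ ∧
      τ₀ ^ (p - 1) * A - τ₀ ^ (q - 1) * B + τ₀ ^ (2 * r - 1) * C = 0 ∧
      ∀ t : ℝ, 0 < t → t ≠ τ₀ →
        t ^ p / p * A - t ^ q / q * B + t ^ (2 * r) / (2 * r) * C <
          τ₀ ^ p / p * A - τ₀ ^ q / q * B + τ₀ ^ (2 * r) / (2 * r) * C := by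
  have hpq : p - q < 0 := by linarith
  have hrq' : 2 * r - q < 0 := by linarith
  obtain ⟨τ, hτ, hzero⟩ := exists_fiberSlope_eq_zero hA hB hC hpq hrq'
  have hanti := strictAntiOn_fiberSlope (B := B) hA hC hpq hrq'.le
  have hmax : ∀ t, 0 < t → t ≠ τ → fiberMap A B C p q (2 * r) t < fiberMap A B C p q (2 * r) τ :=
    fun t ht htτ => lt_of_hasDerivAt_pos_of_neg hτ
      (fun x hx => hasDerivAt_fiberMap (by linarith) (by linarith) (by linarith) hx.ne')
      (fun x hx => by
        rw [← rpow_sub_one_mul_fiberSlope hx.1]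
        exact mul_pos (rpow_pos_of_pos hx.1 _) (hzero ▸ hanti hx.1 hτ hx.2))
      (fun x hx => by
        have hx0 : 0 < x := hτ.trans hx
        rw [← rpow_sub_one_mul_fiberSlope hx0]
        exact mul_neg_of_pos_of_neg (rpow_pos_of_pos hx0 _) (hzero ▸ hanti hτ hx0 hx))
      ht htτ
  refine ⟨τ, ⟨hτ, by rw [← rpow_sub_one_mul_fiberSlope hτ, hzero, mul_zero], hmax⟩, ?_⟩
  rintro σ ⟨hσ, -, hσmax⟩
  by_contra hστ
  exact lt_asymm (hσmax τ hτ (Ne.symm hστ)) (hmax σ hσ hστ)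
end
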